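/- Let X be a topological space with a continuous Mal'tsev operation Φ : X³ → X (i.e., Φ(x,y,y) = Φ(y,y,x) = x for all x,y ∈ X). Let Y₁ and Y₂ be compact Hausdorff spaces containing X as a dense subspace (via dense topological embeddings i₁ : X → Y₁ and i₂ : X → Y₂), and suppose there are continuous maps Φ₁ : Y₁³ → Y₁ and Φ₂ : Y₂³ → Y₂ with Φ₁(i₁x, i₁y, i₁z) = i₁(Φ(x,y,z)) and Φ₂(i₂x, i₂y, i₂z) = i₂(Φ(x,y,z)) for all x,y,z ∈ X. Then Y₁ and Y₂ coincide as extensions of X: there exists a homeomorphism f : Y₁ → Y₂ such that f ∘ i₁ = i₂, i.e., f restricts to the identity on X. -/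

import Mathlib

/-!
Let `Z ⊆ Y₁ × Y₂` be the closure of the diagonal copy `{(i₁ x, i₂ x)}` of `X`. Since `Y₂` is
compact, `Z` projects onto `Y₁`. It is also closed under the coordinatewise operation
`(Φ₁, Φ₂)`, and the Mal'tsev identities pass to `Φ₁` and `Φ₂` by density. So if `(y, z)` and
`(y, z')` lie in `Z`, then `(Φ₁ y y (i₁ x), Φ₂ z z' (i₂ x)) = (i₁ x, Φ₂ z z' (i₂ x))` lies in `Z`
for every `x`. Over a point of `i₁ '' X` the only point of `Z` is the diagonal one, so
`Φ₂ z z' ·` is the identity on `i₂ '' X`, hence on `Y₂`, and `z = Φ₂ z z' z' = z'`. By symmetry,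
`Z` is the graph of a bijection `Y₁ → Y₂`, which is a homeomorphism because `Z` is compact.
-/

open Set Topology

theorem map_mem_closure₃ {α β γ δ : Type*} [TopologicalSpace α] [TopologicalSpace β]
    [TopologicalSpace γ] [TopologicalSpace δ] {f : α → β → γ → δ} {a : α} {b : β} {c : γ}
    {s : Set α} {t : Set β} {u : Set γ} {v : Set δ}
    (hf : Continuous fun p : α × β × γ => f p.1 p.2.1 p.2.2)
    (ha : a ∈ closure s) (hb : b ∈ closure t) (hc : c ∈ closure u)
    (h : ∀ a ∈ s, ∀ b ∈ t, ∀ c ∈ u, f a b c ∈ v) : f a b c ∈ closure v :=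
  map_mem_closure₂ (f := fun a (p : β × γ) => f a p.1 p.2) (t := t ×ˢ u) hf ha
    (by simpa only [closure_prod_eq] using mk_mem_prod hb hc)
    fun a ha p ⟨hb, hc⟩ => h a ha p.1 hb p.2 hc

theorem maltsev_of_denseRange {X Y : Type*} [TopologicalSpace Y] [T2Space Y]
    {Φ : X → X → X → X} (hΦ : ∀ x y : X, Φ x y y = x ∧ Φ y y x = x)
    {i : X → Y} (hi : DenseRange i) {Ψ : Y → Y → Y → Y}
    (hΨc : Continuous fun t : Y × Y × Y => Ψ t.1 t.2.1 t.2.2)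
    (hΨ : ∀ x y z : X, Ψ (i x) (i y) (i z) = i (Φ x y z)) (u v : Y) :
    Ψ u v v = u ∧ Ψ v v u = u := by
  have hii : DenseRange (Prod.map i i) := hi.prodMap hi
  have h₁ : (fun p : Y × Y => Ψ p.1 p.2 p.2) = Prod.fst :=
    hii.equalizer (hΨc.comp (continuous_fst.prodMk (continuous_snd.prodMk continuous_snd)))
      continuous_fst (funext fun p => by simp [hΨ, hΦ])
  have h₂ : (fun p : Y × Y => Ψ p.2 p.2 p.1) = Prod.fst :=
    hii.equalizer (hΨc.comp (continuous_snd.prodMk (continuous_snd.prodMk continuous_fst)))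
      continuous_fst (funext fun p => by simp [hΨ, hΦ])
  exact ⟨congrFun h₁ (u, v), congrFun h₂ (u, v)⟩

section DiagonalClosure

variable {X Y₁ Y₂ : Type*} [TopologicalSpace Y₁] [TopologicalSpace Y₂] {i₁ : X → Y₁} {i₂ : X → Y₂}

theorem swap_mem_closure_range_prodMk {y : Y₁} {z : Y₂}
    (h : (y, z) ∈ closure (range fun x => (i₁ x, i₂ x))) :
    (z, y) ∈ closure (range fun x => (i₂ x, i₁ x)) :=
  map_mem_closure (f := Prod.swap) continuous_swap h (by rintro _ ⟨x, rfl⟩; exact ⟨x, rfl⟩)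

theorem mem_closure_range_prodMk_swap {y : Y₁} {z : Y₂} :
    (z, y) ∈ closure (range fun x => (i₂ x, i₁ x)) ↔
      (y, z) ∈ closure (range fun x => (i₁ x, i₂ x)) :=
  ⟨swap_mem_closure_range_prodMk, swap_mem_closure_range_prodMk⟩

theorem exists_mem_closure_range_prodMk [CompactSpace Y₂] (hi₁ : DenseRange i₁) (y : Y₁) :
    ∃ z, (y, z) ∈ closure (range fun x => (i₁ x, i₂ x)) := by
  have hclosed : IsClosed (Prod.fst '' closure (range fun x => (i₁ x, i₂ x))) :=
    isClosedMap_fst_of_compactSpace _ isClosed_closure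
  have hsub : range i₁ ⊆ Prod.fst '' closure (range fun x => (i₁ x, i₂ x)) := by
    rintro _ ⟨x, rfl⟩
    exact ⟨(i₁ x, i₂ x), subset_closure ⟨x, rfl⟩, rfl⟩
  obtain ⟨⟨_, z⟩, hz, rfl⟩ := hclosed.closure_subset_iff.2 hsub (hi₁.closure_range ▸ mem_univ y)
  exact ⟨z, hz⟩

variable [TopologicalSpace X]

theorem eq_of_mk_mem_closure_range_prodMk [T2Space Y₂] (hi₁ : IsInducing i₁)
    (hi₂ : Continuous i₂) {x : X} {z : Y₂}
    (h : (i₁ x, z) ∈ closure (range fun x => (i₁ x, i₂ x))) : z = i₂ x := by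
  have hgraph : IsClosed {p : X × Y₂ | i₂ p.1 = p.2} :=
    isClosed_eq (hi₂.comp continuous_fst) continuous_snd
  have hrange : (range fun x => (i₁ x, i₂ x)) = Prod.map i₁ id '' {p | i₂ p.1 = p.2} := by
    ext p
    simp [eq_comm]
  rw [hrange] at h
  have : (x, z) ∈ closure {p : X × Y₂ | i₂ p.1 = p.2} := by
    rw [(hi₁.prodMap IsInducing.id).closure_eq_preimage_closure_image]
    exact h
  exact (hgraph.closure_subset this).symm

variable [T2Space Y₁] [T2Space Y₂] {Φ : X → X → X → X} {Φ₁ : Y₁ → Y₁ → Y₁ → Y₁}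
  {Φ₂ : Y₂ → Y₂ → Y₂ → Y₂}

theorem eq_of_mem_closure_range_prodMk_of_maltsev
    (hΦ : ∀ x y : X, Φ x y y = x ∧ Φ y y x = x)
    (hi₁ : IsDenseInducing i₁) (hi₂ : DenseRange i₂) (hi₂c : Continuous i₂)
    (hΦ₁c : Continuous fun t : Y₁ × Y₁ × Y₁ => Φ₁ t.1 t.2.1 t.2.2)
    (hΦ₂c : Continuous fun t : Y₂ × Y₂ × Y₂ => Φ₂ t.1 t.2.1 t.2.2)
    (hΦ₁ : ∀ x y z : X, Φ₁ (i₁ x) (i₁ y) (i₁ z) = i₁ (Φ x y z))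
    (hΦ₂ : ∀ x y z : X, Φ₂ (i₂ x) (i₂ y) (i₂ z) = i₂ (Φ x y z))
    {y : Y₁} {z z' : Y₂} (hz : (y, z) ∈ closure (range fun x => (i₁ x, i₂ x)))
    (hz' : (y, z') ∈ closure (range fun x => (i₁ x, i₂ x))) : z = z' := by
  have hrange : ∀ p ∈ range (fun x => (i₁ x, i₂ x)), ∀ q ∈ range (fun x => (i₁ x, i₂ x)),
      ∀ r ∈ range (fun x => (i₁ x, i₂ x)),
        (Φ₁ p.1 q.1 r.1, Φ₂ p.2 q.2 r.2) ∈ range (fun x => (i₁ x, i₂ x)) := by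
    rintro _ ⟨a, rfl⟩ _ ⟨b, rfl⟩ _ ⟨c, rfl⟩
    exact mem_range.2 ⟨Φ a b c, by simp only [hΦ₁, hΦ₂]⟩
  have hfix : (fun w => Φ₂ z z' w) ∘ i₂ = id ∘ i₂ := by
    funext x
    have hmem : (Φ₁ y y (i₁ x), Φ₂ z z' (i₂ x)) ∈ closure (range fun x => (i₁ x, i₂ x)) :=
      map_mem_closure₃ (f := fun p q r : Y₁ × Y₂ => (Φ₁ p.1 q.1 r.1, Φ₂ p.2 q.2 r.2))
        (by fun_prop) hz hz' (subset_closure (mem_range_self x)) hrange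
    rw [(maltsev_of_denseRange hΦ hi₁.dense hΦ₁c hΦ₁ (i₁ x) y).2] at hmem
    exact eq_of_mk_mem_closure_range_prodMk hi₁.isInducing hi₂c hmem
  have hid : (fun w => Φ₂ z z' w) = id :=
    hi₂.equalizer (hΦ₂c.comp (continuous_const.prodMk (continuous_const.prodMk continuous_id)))
      continuous_id hfix
  calc z = Φ₂ z z' z' := ((maltsev_of_denseRange hΦ hi₂ hΦ₂c hΦ₂ z z').1).symm
    _ = z' := congrFun hid z'

theorem existsUnique_mem_closure_range_prodMk_of_maltsev [CompactSpace Y₂]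
    (hΦ : ∀ x y : X, Φ x y y = x ∧ Φ y y x = x)
    (hi₁ : IsDenseInducing i₁) (hi₂ : DenseRange i₂) (hi₂c : Continuous i₂)
    (hΦ₁c : Continuous fun t : Y₁ × Y₁ × Y₁ => Φ₁ t.1 t.2.1 t.2.2)
    (hΦ₂c : Continuous fun t : Y₂ × Y₂ × Y₂ => Φ₂ t.1 t.2.1 t.2.2)
    (hΦ₁ : ∀ x y z : X, Φ₁ (i₁ x) (i₁ y) (i₁ z) = i₁ (Φ x y z))
    (hΦ₂ : ∀ x y z : X, Φ₂ (i₂ x) (i₂ y) (i₂ z) = i₂ (Φ x y z)) (y : Y₁) :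
    ∃! z, (y, z) ∈ closure (range fun x => (i₁ x, i₂ x)) :=
  let ⟨z, hz⟩ := exists_mem_closure_range_prodMk hi₁.dense y
  ⟨z, hz, fun _ hz' =>
    eq_of_mem_closure_range_prodMk_of_maltsev hΦ hi₁ hi₂ hi₂c hΦ₁c hΦ₂c hΦ₁ hΦ₂ hz' hz⟩

end DiagonalClosure

theorem exists_homeomorph_of_isClosed_of_existsUnique {Y₁ Y₂ : Type*} [TopologicalSpace Y₁]
    [TopologicalSpace Y₂] [CompactSpace Y₁] [CompactSpace Y₂] [T2Space Y₁] [T2Space Y₂]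
    {Z : Set (Y₁ × Y₂)} (hZ : IsClosed Z) (h₁ : ∀ y, ∃! z, (y, z) ∈ Z)
    (h₂ : ∀ z, ∃! y, (y, z) ∈ Z) :
    ∃ f : Y₁ ≃ₜ Y₂, ∀ y z, (y, z) ∈ Z → f y = z := by
  have : CompactSpace Z := isCompact_iff_compactSpace.mp hZ.isCompact
  have hfst : Function.Bijective fun p : Z => p.1.1 := by
    refine ⟨?_, fun y => ?_⟩
    · rintro ⟨⟨y, z⟩, hz⟩ ⟨⟨y', z'⟩, hz'⟩ (rfl : y = y')
      simp only [Subtype.mk.injEq, Prod.mk.injEq, true_and]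
      exact (h₁ y).unique hz hz'
    · obtain ⟨z, hz, -⟩ := h₁ y
      exact ⟨⟨(y, z), hz⟩, rfl⟩
  have hsnd : Function.Bijective fun p : Z => p.1.2 := by
    refine ⟨?_, fun z => ?_⟩
    · rintro ⟨⟨y, z⟩, hz⟩ ⟨⟨y', z'⟩, hz'⟩ (rfl : z = z')
      simp only [Subtype.mk.injEq, Prod.mk.injEq, and_true]
      exact (h₂ z).unique hz hz'
    · obtain ⟨y, hy, -⟩ := h₂ z
      exact ⟨⟨(y, z), hy⟩, rfl⟩
  let f₁ : Z ≃ₜ Y₁ := (continuous_fst.comp continuous_subtype_val).homeoOfEquivCompactToT2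
    (f := Equiv.ofBijective _ hfst)
  let f₂ : Z ≃ₜ Y₂ := (continuous_snd.comp continuous_subtype_val).homeoOfEquivCompactToT2
    (f := Equiv.ofBijective _ hsnd)
  refine ⟨f₁.symm.trans f₂, fun y z hyz => ?_⟩
  have : f₁.symm y = ⟨(y, z), hyz⟩ := f₁.symm_apply_eq.2 rfl
  rw [Homeomorph.trans_apply, this]
  rfl

theorem maltsev_compactification_unique_general {X Y₁ Y₂ : Type*}
    [TopologicalSpace X] [TopologicalSpace Y₁] [TopologicalSpace Y₂]
    [CompactSpace Y₁] [T2Space Y₁] [CompactSpace Y₂] [T2Space Y₂]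
    (Φ : X → X → X → X)
    (h1 : ∀ x y : X, Φ x y y = x ∧ Φ y y x = x)
    (i₁ : X → Y₁) (i₂ : X → Y₂)
    (hi₁ : IsDenseEmbedding i₁) (hi₂ : IsDenseEmbedding i₂)
    (Φ₁ : Y₁ → Y₁ → Y₁ → Y₁) (Φ₂ : Y₂ → Y₂ → Y₂ → Y₂)
    (hΦ₁c : Continuous (fun t : Y₁ × Y₁ × Y₁ => Φ₁ t.1 t.2.1 t.2.2))
    (hΦ₂c : Continuous (fun t : Y₂ × Y₂ × Y₂ => Φ₂ t.1 t.2.1 t.2.2))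
    (hΦ₁ : ∀ x y z : X, Φ₁ (i₁ x) (i₁ y) (i₁ z) = i₁ (Φ x y z))
    (hΦ₂ : ∀ x y z : X, Φ₂ (i₂ x) (i₂ y) (i₂ z) = i₂ (Φ x y z)) :
    ∃ f : Y₁ ≃ₜ Y₂, ∀ x : X, f (i₁ x) = i₂ x := by
  have h₁₂ := existsUnique_mem_closure_range_prodMk_of_maltsev h1 hi₁.isDenseInducing
    hi₂.dense hi₂.continuous hΦ₁c hΦ₂c hΦ₁ hΦ₂
  have h₂₁ (z : Y₂) : ∃! y, (y, z) ∈ closure (range fun x => (i₁ x, i₂ x)) :=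
    (existsUnique_congr fun _ => mem_closure_range_prodMk_swap).1 <|
      existsUnique_mem_closure_range_prodMk_of_maltsev h1 hi₂.isDenseInducing hi₁.dense
        hi₁.continuous hΦ₂c hΦ₁c hΦ₂ hΦ₁ z
  obtain ⟨f, hf⟩ := exists_homeomorph_of_isClosed_of_existsUnique isClosed_closure h₁₂ h₂₁
  exact ⟨f, fun x => hf _ _ (subset_closure ⟨x, rfl⟩)⟩

/-- Uniqueness of the compact Hausdorff extension of a continuous Mal'tsev
operation: if a continuous Mal'tsev operation on X extends continuously to two
compact Hausdorff extensions Y₁ and Y₂, then Y₁ and Y₂ coincide as extensions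
of X. -/
theorem maltsev_compactification_unique {X Y₁ Y₂ : Type*}
    [TopologicalSpace X] [TopologicalSpace Y₁] [TopologicalSpace Y₂]
    [CompactSpace Y₁] [T2Space Y₁] [CompactSpace Y₂] [T2Space Y₂]
    (Φ : X → X → X → X)
    (hΦc : Continuous (fun t : X × X × X => Φ t.1 t.2.1 t.2.2))
    (h1 : ∀ x y : X, Φ x y y = x ∧ Φ y y x = x)
    (i₁ : X → Y₁) (i₂ : X → Y₂)
    (hi₁ : IsDenseEmbedding i₁) (hi₂ : IsDenseEmbedding i₂)
    (Φ₁ : Y₁ → Y₁ → Y₁ → Y₁) (Φ₂ : Y₂ → Y₂ → Y₂ → Y₂)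
    (hΦ₁c : Continuous (fun t : Y₁ × Y₁ × Y₁ => Φ₁ t.1 t.2.1 t.2.2))
    (hΦ₂c : Continuous (fun t : Y₂ × Y₂ × Y₂ => Φ₂ t.1 t.2.1 t.2.2))
    (hΦ₁ : ∀ x y z : X, Φ₁ (i₁ x) (i₁ y) (i₁ z) = i₁ (Φ x y z))
    (hΦ₂ : ∀ x y z : X, Φ₂ (i₂ x) (i₂ y) (i₂ z) = i₂ (Φ x y z)) :
    ∃ f : Y₁ ≃ₜ Y₂, ∀ x : X, f (i₁ x) = i₂ x :=
  maltsev_compactification_unique_general Φ h1 i₁ i₂ hi₁ hi₂ Φ₁ Φ₂ hΦ₁c hΦ₂c hΦ₁ hΦ₂
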